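/- (Smoothing property of Gauss–Seidel, Lemma 6.4.) Let A ∈ ℝ^{N×N} be symmetric positive definite with A = D + L + Lᵀ (D diagonal part, L strictly lower-triangular part), R = (D+L)^{-1} the Gauss–Seidel smoother, and R̄ := Rᵀ + R − RᵀAR = RᵀDR. Let C_s := max over 1 ≤ i ≤ N of the number of indices j with A_{ij} ≠ 0 (the maximal number of nonzero entries in a row of A, counting the diagonal). Then R̄ is symmetric positive definite and for every v ∈ ℝ^N, ‖RᵀAv‖²_{R̄^{-1}} = ⟨D^{-1}Av, Av⟩ ≤ C_s² ‖v‖²_A; in particular ‖RᵀAv‖_{R̄^{-1}} ≤ C_s ‖v‖_A, where C_s depends only on the sparsity pattern of A. -/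

import Mathlib

/-!
Write `M = D + L`, so that `R = M⁻¹`. As `A` is symmetric, `M + Mᵀ - A = D`, whence
`R̄ = Rᵀ + R - RᵀAR = Rᵀ D R`, which is positive definite, and `R̄⁻¹ = M D⁻¹ Mᵀ` turns
`‖RᵀAv‖²_{R̄⁻¹}` into `⟨D⁻¹Av, Av⟩`.

For the bound, `2 xᵢ Aᵢⱼ xⱼ ≤ Aᵢᵢ xᵢ² + Aⱼⱼ xⱼ²` summed over the nonzero entries gives
`xᵀAx ≤ C_s xᵀDx`. With `u = D⁻¹Av` we have `⟨D⁻¹Av, Av⟩ = ⟨Au, v⟩`, so Cauchy–Schwarz for the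
form of `A` gives `⟨D⁻¹Av, Av⟩² ≤ ‖v‖²_A ‖u‖²_A ≤ ‖v‖²_A · C_s ⟨D⁻¹Av, Av⟩`, that is
`⟨D⁻¹Av, Av⟩ ≤ C_s ‖v‖²_A ≤ C_s² ‖v‖²_A`.
-/

open Matrix

/-- The `A`-norm `‖v‖_A = √⟨Av, v⟩` of a vector. -/
noncomputable def anorm {ι : Type*} [Fintype ι] (A : Matrix ι ι ℝ) (v : ι → ℝ) : ℝ :=
  Real.sqrt (v ⬝ᵥ (A *ᵥ v))

/-- The `A`-operator norm `‖B‖_A = sup_{v ≠ 0} ‖Bv‖_A / ‖v‖_A` of a matrix. -/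
noncomputable def aOpNorm {ι : Type*} [Fintype ι] (A B : Matrix ι ι ℝ) : ℝ :=
  sSup {t | ∃ v : ι → ℝ, v ≠ 0 ∧ t = anorm A (B *ᵥ v) / anorm A v}

namespace Matrix

open Finset

section PosSemidef

variable {ι : Type*} [Fintype ι]

lemma PosSemidef.dotProduct_mulVec_sq_le {A : Matrix ι ι ℝ} (hA : A.PosSemidef) (x y : ι → ℝ) :
    (x ⬝ᵥ (A *ᵥ y)) ^ 2 ≤ (x ⬝ᵥ (A *ᵥ x)) * (y ⬝ᵥ (A *ᵥ y)) := by
  classical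
  simpa only [toBilin'_apply'] using (toBilin' A).apply_sq_le_of_symm
    (fun x => by simpa only [toBilin'_apply', star_trivial] using hA.dotProduct_mulVec_nonneg x)
    (LinearMap.BilinForm.isSymm_iff.mp
      (isSymm_toBilin'_iff_isSymm.mpr (isHermitian_iff_isSymm.mp hA.1))) x y

variable [DecidableEq ι]

lemma PosSemidef.mul_apply_mul_le {A : Matrix ι ι ℝ} (hA : A.PosSemidef) (x : ι → ℝ) (i j : ι) :
    x i * A i j * x j ≤ (A i i * x i ^ 2 + A j j * x j ^ 2) / 2 := by
  rcases eq_or_ne i j with rfl | hij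
  · linarith
  have h := hA.dotProduct_mulVec_nonneg (Pi.single i (x i) - Pi.single j (x j))
  have hsymm : A j i = A i j := (isHermitian_iff_isSymm.mp hA.1).apply i j
  simp [mulVec_sub, sub_dotProduct, dotProduct_sub, mulVec_single, single_dotProduct, hsymm] at h
  nlinarith

lemma PosSemidef.dotProduct_mulVec_le_sup_card_mul {A : Matrix ι ι ℝ} (hA : A.PosSemidef)
    (x : ι → ℝ) :
    x ⬝ᵥ (A *ᵥ x) ≤ ((univ.sup fun i => (univ.filter fun j => A i j ≠ 0).card : ℕ) : ℝ) *
      (x ⬝ᵥ (diagonal (fun i => A i i) *ᵥ x)) := by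
  -- `f i j` is the half of the bound on `xᵢ Aᵢⱼ xⱼ` charged to row `i`
  set f : ι → ι → ℝ := fun i j => if A i j ≠ 0 then A i i * x i ^ 2 else 0
  have hsymm : ∀ i j, A j i = A i j := (isHermitian_iff_isSymm.mp hA.1).apply
  have hpair (i j : ι) : x i * A i j * x j ≤ (f i j + f j i) / 2 := by
    by_cases h : A i j = 0
    · simp [f, h, hsymm]
    · simpa [f, h, hsymm i j] using hA.mul_apply_mul_le x i j
  have hrow (i : ι) : ∑ j, f i j = (univ.filter fun j => A i j ≠ 0).card * (A i i * x i ^ 2) := by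
    simp only [f, sum_ite, sum_const_zero, add_zero, sum_const, nsmul_eq_mul]
  have hswap : ∑ i, ∑ j, f j i = ∑ i, ∑ j, f i j := sum_comm
  calc x ⬝ᵥ (A *ᵥ x) = ∑ i, ∑ j, x i * A i j * x j := by
        simp only [dotProduct, mulVec, mul_sum, mul_assoc]
    _ ≤ ∑ i, ∑ j, (f i j + f j i) / 2 := by gcongr with i _ j _; exact hpair i j
    _ = ∑ i, ∑ j, f i j := by simp only [← sum_div, sum_add_distrib, hswap, add_self_div_two]
    _ ≤ ∑ i, ((univ.sup fun i => (univ.filter fun j => A i j ≠ 0).card : ℕ) : ℝ) *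
          (A i i * x i ^ 2) := by
        gcongr with i
        rw [hrow]
        gcongr
        · nlinarith [hA.diag_nonneg (i := i)]
        · exact_mod_cast le_sup (f := fun i => (univ.filter fun j => A i j ≠ 0).card) (mem_univ i)
    _ = _ := by
        rw [← mul_sum]
        congr 1
        refine sum_congr rfl fun i _ => ?_
        simp only [mulVec_diagonal]
        ring

lemma PosSemidef.mulVec_dotProduct_inv_mulVec_le {A D : Matrix ι ι ℝ} (hA : A.PosSemidef)
    (hD : IsUnit D) {c : ℝ} (hc : 0 ≤ c) (hAD : ∀ u, u ⬝ᵥ (A *ᵥ u) ≤ c * (u ⬝ᵥ (D *ᵥ u)))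
    (v : ι → ℝ) : (A *ᵥ v) ⬝ᵥ (D⁻¹ *ᵥ (A *ᵥ v)) ≤ c * (v ⬝ᵥ (A *ᵥ v)) := by
  set u := D⁻¹ *ᵥ (A *ᵥ v)
  set q := (A *ᵥ v) ⬝ᵥ u
  have hDu : D *ᵥ u = A *ᵥ v := by
    rw [mulVec_mulVec, mul_nonsing_inv _ ((isUnit_iff_isUnit_det D).mp hD), one_mulVec]
  have hq : q = v ⬝ᵥ (A *ᵥ u) := by
    rw [dotProduct_mulVec, ← mulVec_transpose, (isHermitian_iff_isSymm.mp hA.1).eq]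
  have hvAv : 0 ≤ v ⬝ᵥ (A *ᵥ v) := by simpa using hA.dotProduct_mulVec_nonneg v
  have hq2 : q ^ 2 ≤ v ⬝ᵥ (A *ᵥ v) * (c * q) := calc
    q ^ 2 ≤ v ⬝ᵥ (A *ᵥ v) * (u ⬝ᵥ (A *ᵥ u)) := hq ▸ hA.dotProduct_mulVec_sq_le v u
    _ ≤ v ⬝ᵥ (A *ᵥ v) * (c * q) := by
      gcongr
      simpa only [q, dotProduct_comm (A *ᵥ v), ← hDu] using hAD u
  rcases le_or_gt q 0 with hq0 | hq0
  · exact hq0.trans (by positivity)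
  · nlinarith

end PosSemidef

section Conjugation

variable {α ι : Type*} [CommRing α] [Fintype ι] [DecidableEq ι]

lemma transpose_mulVec_dotProduct_inv_mulVec {R : Matrix ι ι α} (hR : IsUnit R)
    (K : Matrix ι ι α) (w : ι → α) :
    (Rᵀ *ᵥ w) ⬝ᵥ ((Rᵀ * K * R)⁻¹ *ᵥ (Rᵀ *ᵥ w)) = w ⬝ᵥ (K⁻¹ *ᵥ w) := by
  have hRT : (Rᵀ)⁻¹ * Rᵀ = 1 :=
    nonsing_inv_mul _ (by rw [det_transpose]; exact (isUnit_iff_isUnit_det R).mp hR)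
  have hw : (Rᵀ)⁻¹ *ᵥ (Rᵀ *ᵥ w) = w := by rw [mulVec_mulVec, hRT, one_mulVec]
  rw [mul_inv_rev, mul_inv_rev, ← mulVec_mulVec, ← mulVec_mulVec, hw, dotProduct_mulVec,
    ← mulVec_transpose, transpose_nonsing_inv, hw]

lemma transpose_inv_add_inv_sub_eq {M : Matrix ι ι α} (hM : IsUnit M) (A : Matrix ι ι α) :
    (M⁻¹)ᵀ + M⁻¹ - (M⁻¹)ᵀ * A * M⁻¹ = (M⁻¹)ᵀ * (M + Mᵀ - A) * M⁻¹ := by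
  have hMM : M * M⁻¹ = 1 := mul_nonsing_inv _ ((isUnit_iff_isUnit_det M).mp hM)
  have hMMT : (M⁻¹)ᵀ * Mᵀ = 1 := by rw [← transpose_mul, hMM, transpose_one]
  rw [Matrix.mul_sub, Matrix.mul_add, Matrix.sub_mul, Matrix.add_mul, Matrix.mul_assoc _ M, hMM,
    hMMT, Matrix.mul_one, Matrix.one_mul]

end Conjugation

section GaussSeidel

variable {ι α : Type*} [LinearOrder ι]

lemma det_diagonal_add_strictLower [Fintype ι] [CommRing α] (A : Matrix ι ι α) :
    (diagonal (fun i => A i i) + of fun i j => if j < i then A i j else 0).det = ∏ i, A i i := by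
  rw [det_of_isLowerTriangular]
  · simp
  · intro i j hij
    have hij' : i < j := hij
    simp [hij'.ne, not_lt.mpr hij'.le]

lemma IsSymm.diagonal_add_strictLower_add_transpose_sub [AddCommGroup α] {A : Matrix ι ι α}
    (hA : A.IsSymm) :
    let M := diagonal (fun i => A i i) + of fun i j => if j < i then A i j else 0
    M + Mᵀ - A = diagonal fun i => A i i := by
  ext i j
  rcases lt_trichotomy i j with h | rfl | h
  · simp [h, h.ne, not_lt.mpr h.le, hA.apply i j]
  · simp
  · simp [h, h.ne', not_lt.mpr h.le]

end GaussSeidel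

end Matrix

/-- smoothing property of Gauss–Seidel, Lemma 6.4. With
`C_s = max_i #{j : A_{ij} ≠ 0}`, `R̄` is SPD and for every `v`,
`‖RᵀAv‖²_{R̄⁻¹} = ⟨D⁻¹Av, Av⟩ ≤ C_s² ‖v‖²_A`, in particular
`‖RᵀAv‖_{R̄⁻¹} ≤ C_s ‖v‖_A`. -/
theorem stmt14 {N : ℕ} (A : Matrix (Fin N) (Fin N) ℝ) (hA : A.PosDef) :
    let D : Matrix (Fin N) (Fin N) ℝ := Matrix.diagonal fun i => A i i
    let L : Matrix (Fin N) (Fin N) ℝ := Matrix.of fun i j => if j < i then A i j else 0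
    let R := (D + L)⁻¹
    let Rbar := Rᵀ + R - Rᵀ * A * R
    let Cs : ℕ := Finset.univ.sup fun i => (Finset.univ.filter fun j => A i j ≠ 0).card
    Rbar.PosDef ∧
      ∀ v : Fin N → ℝ,
        ((Rᵀ * A) *ᵥ v) ⬝ᵥ (Rbar⁻¹ *ᵥ ((Rᵀ * A) *ᵥ v)) =
            (A *ᵥ v) ⬝ᵥ (D⁻¹ *ᵥ (A *ᵥ v)) ∧
          (A *ᵥ v) ⬝ᵥ (D⁻¹ *ᵥ (A *ᵥ v)) ≤ (Cs : ℝ) ^ 2 * (v ⬝ᵥ (A *ᵥ v)) ∧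
          Real.sqrt (((Rᵀ * A) *ᵥ v) ⬝ᵥ (Rbar⁻¹ *ᵥ ((Rᵀ * A) *ᵥ v))) ≤
            (Cs : ℝ) * Real.sqrt (v ⬝ᵥ (A *ᵥ v)) := by
  intro D L R Rbar Cs
  have hD : D.PosDef := PosDef.diagonal fun i => hA.diag_pos
  have hM : IsUnit (D + L) := by
    rw [isUnit_iff_isUnit_det, det_diagonal_add_strictLower]
    exact (Finset.prod_pos fun i _ => hA.diag_pos).ne'.isUnit
  have hR : IsUnit R := isUnit_nonsing_inv_iff.mpr hM
  have hRbar : Rbar = Rᵀ * D * R := by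
    have := transpose_inv_add_inv_sub_eq hM A
    rwa [(isHermitian_iff_isSymm.mp hA.1).diagonal_add_strictLower_add_transpose_sub] at this
  have hnorm (v : Fin N → ℝ) : ((Rᵀ * A) *ᵥ v) ⬝ᵥ (Rbar⁻¹ *ᵥ ((Rᵀ * A) *ᵥ v)) =
      (A *ᵥ v) ⬝ᵥ (D⁻¹ *ᵥ (A *ᵥ v)) := by
    rw [hRbar, ← mulVec_mulVec, transpose_mulVec_dotProduct_inv_mulVec hR]
  have hbound (v : Fin N → ℝ) :
      (A *ᵥ v) ⬝ᵥ (D⁻¹ *ᵥ (A *ᵥ v)) ≤ (Cs : ℝ) ^ 2 * (v ⬝ᵥ (A *ᵥ v)) :=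
    calc _ ≤ (Cs : ℝ) * (v ⬝ᵥ (A *ᵥ v)) :=
          hA.posSemidef.mulVec_dotProduct_inv_mulVec_le hD.isUnit (Nat.cast_nonneg Cs)
            hA.posSemidef.dotProduct_mulVec_le_sup_card_mul v
      _ ≤ (Cs : ℝ) ^ 2 * (v ⬝ᵥ (A *ᵥ v)) := by
          gcongr
          · simpa using hA.posSemidef.dotProduct_mulVec_nonneg v
          · exact_mod_cast Nat.le_self_pow two_ne_zero Cs
  refine ⟨?_, fun v => ⟨hnorm v, hbound v, ?_⟩⟩
  · rw [hRbar, ← conjTranspose_eq_transpose_of_trivial]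
    exact hD.conjTranspose_mul_mul_same (mulVec_injective_of_isUnit hR)
  · rw [hnorm, ← Real.sqrt_sq (Nat.cast_nonneg (α := ℝ) Cs), ← Real.sqrt_mul (sq_nonneg _)]
    exact Real.sqrt_le_sqrt (hbound v)
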